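/- (Reformulated Π theorem.) Let Q be a quantity space over the scalar system ℝ>0, and let d, d₁, …, d_m, b₁, …, b_r ∈ Q be such that b₁, …, b_r are independent (λ • ∏ⱼ bⱼ^{kⱼ} = 1_Q with λ ∈ ℝ>0 and integers kⱼ implies all kⱼ = 0) and for each i there exist integers cᵢ > 0 and c_{i1}, …, c_{ir} with dᵢ^{cᵢ} ~ ∏ⱼ bⱼ^{c_{ij}} (so that {[b₁], …, [b_r]} is a maximal independent set in the dimension group generated by the [dᵢ] and [bⱼ]). Let Ψ be a quantity function assigning to each tuple (p₁, …, p_m, q₁, …, q_r) with pᵢ ~ dᵢ and qⱼ ~ bⱼ a quantity Ψ(p, q) ~ d, and suppose Ψ has a covariant scalar representation. Then there exist integers k > 0 and k₁, …, k_r with d^k ~ ∏ⱼ bⱼ^{kⱼ}, integers cᵢ > 0 and c_{ij} with dᵢ^{cᵢ} ~ ∏ⱼ bⱼ^{c_{ij}} for each i, and a function Φ taking m-tuples of quantities equidimensional with 1_Q to a quantity equidimensional with 1_Q, such that for all admissible inputs, Ψ(p, q)^k = (∏ⱼ qⱼ^{kⱼ}) · Φ(Π₁, …, Π_m), where Πᵢ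 = pᵢ^{cᵢ} · (∏ⱼ qⱼ^{c_{ij}})⁻¹. -/

import Mathlib

/-!
Fix a basis and record each quantity by its measure and its exponent vector in `ℤⁿ`. For an
additive map `χ : ℤⁿ → ℝ`, rescaling the `l`-th basis vector by `exp (χ eₗ)` gives a new basis in
which every measure is divided by `exp (χ (exponents q))`, and covariance of `ψ` under these
rescalings gives both halves of the theorem. If `χ` vanishes on the exponents of the `bⱼ`, hence on
those of the `dᵢ`, the rescaling fixes the measures of all inputs, so `χ` vanishes on the exponent
of `d`: that exponent is a rational combination of the exponents of the `bⱼ`, i.e. `d^k ~ ∏ bⱼ^kⱼ`.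
Since the `bⱼ` are independent, `χ` can instead be chosen so that every `qⱼ` has measure `1`; in
that basis `pᵢ` has measure `Πᵢ^(1/cᵢ)`, whence `Ψ(p, q)^k = ψ(Π^(1/c), 1)^k • ∏ qⱼ^kⱼ`.
-/

/-- A *scalable (commutative) monoid* over a scalar system `K ⊆ F`:
`K` is a subset of the field `F` closed under addition, containing `1`,
closed under multiplication and under inverses of nonzero elements
(so the nonzero elements of `K` form a group under multiplication),
together with a scalar multiplication `smul` satisfying the axioms
`1 • q = q`, `α • (β • q) = (α β) • q` and `α • (q * q') = (α • q) * q'`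
for scalars in `K`. -/
structure ScalableMonoid (F : Type*) [Field F] (Q : Type*) [CommMonoid Q] where
  K : Set F
  one_mem : (1 : F) ∈ K
  add_mem : ∀ {a b : F}, a ∈ K → b ∈ K → a + b ∈ K
  mul_mem : ∀ {a b : F}, a ∈ K → b ∈ K → a * b ∈ K
  inv_mem : ∀ {a : F}, a ∈ K → a ≠ 0 → a⁻¹ ∈ K
  smul : F → Q → Q
  smul_one : ∀ q : Q, smul 1 q = q
  smul_smul : ∀ {a b : F}, a ∈ K → b ∈ K → ∀ q : Q, smul a (smul b q) = smul (a * b) q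
  smul_mul : ∀ {a : F}, a ∈ K → ∀ q q' : Q, smul a (q * q') = smul a q * q'

/-- `b : Fin n → Qˣ` (a list of invertible quantities) is a basis for the scalable
monoid `M` if every quantity has a unique expansion `q = μ • ∏ i, b i ^ k i`
with `μ ∈ K` and integer exponents `k`. -/
def ScalableMonoid.IsBasis {F : Type*} [Field F] {Q : Type*} [CommMonoid Q]
    (M : ScalableMonoid F Q) {n : ℕ} (b : Fin n → Qˣ) : Prop :=
  ∀ q : Q, ∃! p : M.K × (Fin n → ℤ),
    q = M.smul (p.1 : F) (↑(∏ i, b i ^ p.2 i) : Q)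

/-- A quantity space is a scalable monoid having a (finite) basis. -/
def ScalableMonoid.IsQuantitySpace {F : Type*} [Field F] {Q : Type*} [CommMonoid Q]
    (M : ScalableMonoid F Q) : Prop :=
  ∃ (n : ℕ) (b : Fin n → Qˣ), M.IsBasis b

/-- The measure `μ_B(q)`: the unique scalar in the expansion of `q` relative to
the basis `B`. -/
noncomputable def ScalableMonoid.measure {F : Type*} [Field F] {Q : Type*} [CommMonoid Q]
    (M : ScalableMonoid F Q) {n : ℕ} {b : Fin n → Qˣ} (hB : M.IsBasis b) (q : Q) : F :=
  ((hB q).choose.1 : F)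

/-- Quantities `q, q'` are equidimensional (`q ~ q'`) if `α • q = β • q'`
for some scalars `α, β ∈ K`. -/
def ScalableMonoid.Equidim {F : Type*} [Field F] {Q : Type*} [CommMonoid Q]
    (M : ScalableMonoid F Q) (q q' : Q) : Prop :=
  ∃ α β : F, α ∈ M.K ∧ β ∈ M.K ∧ M.smul α q = M.smul β q'

theorem linearIndependent_intCast_comp {ι σ : Type*} [Finite σ] {E : ι → σ → ℤ}
    (hE : LinearIndependent ℤ E) : LinearIndependent ℝ fun j => (Int.cast ∘ E j : σ → ℝ) := by
  have := linearIndependent_algebraMap_comp_iff (S := ℝ).2 hE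
  rwa [algebraMap_int_eq, Int.coe_castRingHom] at this

theorem exists_addMonoidHom_apply_eq {ι σ : Type*} [Fintype ι] [Finite σ] {E : ι → σ → ℤ}
    (hE : LinearIndependent ℤ E) (w : ι → ℝ) :
    ∃ χ : (σ → ℤ) →+ ℝ, ∀ j, χ (E j) = w j := by
  classical
  obtain ⟨L, hL⟩ := LinearMap.exists_leftInverse_of_injective _ <| LinearMap.ker_eq_bot.2 <|
    linearIndependent_iff_injective_fintypeLinearCombination.1 (linearIndependent_intCast_comp hE)
  refine ⟨(Fintype.linearCombination ℝ w ∘ₗ L).toAddMonoidHom.comp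
    (AddMonoidHom.compLeft (Int.castAddHom ℝ) σ), fun j => ?_⟩
  have hLE : L (Int.cast ∘ E j) = Pi.single j 1 := by
    simpa [Fintype.linearCombination_apply_single] using LinearMap.congr_fun hL (Pi.single j 1)
  change Fintype.linearCombination ℝ w (L (Int.cast ∘ E j)) = w j
  rw [hLE, Fintype.linearCombination_apply_single, one_smul]

theorem exists_pos_nsmul_eq_sum_zsmul {ι σ : Type*} [Fintype ι] [Fintype σ] {E : ι → σ → ℤ}
    (hE : LinearIndependent ℤ E) {D : σ → ℤ}
    (h : ∀ χ : (σ → ℤ) →+ ℝ, (∀ j, χ (E j) = 0) → χ D = 0) :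
    ∃ k : ℕ, 0 < k ∧ ∃ kv : ι → ℤ, k • D = ∑ j, kv j • E j := by
  have hspan : (Int.cast ∘ D : σ → ℝ) ∈
      Submodule.span ℝ (Set.range fun j => (Int.cast ∘ E j : σ → ℝ)) := by
    refine (Subspace.forall_mem_dualAnnihilator_apply_eq_zero_iff _ _).1 fun f hf =>
      h (f.toAddMonoidHom.comp (AddMonoidHom.compLeft (Int.castAddHom ℝ) σ)) fun j => ?_
    exact (Submodule.mem_dualAnnihilator _).1 hf _ (Submodule.subset_span ⟨j, rfl⟩)
  -- A vector in the real span of integer vectors gives an integer relation, in which `D` must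
  -- occur because the `E j` are independent.
  have hdep : ¬ LinearIndependent ℤ fun o : Option ι => Option.casesOn' o D E :=
    fun hind => (linearIndependent_option.1 (linearIndependent_intCast_comp hind)).2 hspan
  obtain ⟨g, hg, o, ho⟩ := Fintype.not_linearIndependent_iff.1 hdep
  rw [Fintype.sum_option] at hg
  have hg₀ : g none ≠ 0 := by
    rintro h₀
    rw [h₀, zero_smul, zero_add] at hg
    cases o with
    | none => exact ho h₀
    | some j => exact ho (Fintype.linearIndependent_iff.1 hE _ hg j)
  refine ⟨(g none).natAbs, Int.natAbs_pos.2 hg₀, fun j => -((g none).sign * g (some j)), ?_⟩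
  rw [← natCast_zsmul, ← Int.sign_mul_self_eq_natAbs, mul_smul]
  simp only [Option.casesOn'_none, Option.casesOn'_some] at hg
  rw [eq_neg_of_add_eq_zero_left hg]
  simp [Finset.smul_sum, mul_smul]

theorem prod_exp_map_single_zpow {ι : Type*} [Fintype ι] [DecidableEq ι] (χ : (ι → ℤ) →+ ℝ)
    (k : ι → ℤ) : ∏ l, Real.exp (χ (Pi.single l 1)) ^ k l = Real.exp (χ k) := by
  conv_rhs => rw [pi_eq_sum_univ' k]
  simp only [map_sum, map_zsmul, Real.exp_sum]
  refine Finset.prod_congr rfl fun l _ => ?_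
  rw [zsmul_eq_mul, mul_comm, Real.exp_mul, Real.rpow_intCast]

namespace ScalableMonoid

section

variable {F : Type*} [Field F] {Q : Type*} [CommMonoid Q] {M : ScalableMonoid F Q}

theorem smul_mul_smul {a a' : F} (ha : a ∈ M.K) (ha' : a' ∈ M.K) (q q' : Q) :
    M.smul a q * M.smul a' q' = M.smul (a * a') (q * q') := by
  rw [← M.smul_mul ha, mul_comm q, ← M.smul_mul ha', M.smul_smul ha ha', mul_comm q']

theorem smul_eq_mul_smul_one {a : F} (ha : a ∈ M.K) (q : Q) : M.smul a q = q * M.smul a 1 := by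
  rw [mul_comm, ← M.smul_mul ha, one_mul]

theorem equidim_refl (q : Q) : M.Equidim q q :=
  ⟨1, 1, M.one_mem, M.one_mem, rfl⟩

theorem smul_equidim {a : F} (ha : a ∈ M.K) (q : Q) : M.Equidim (M.smul a q) q :=
  ⟨1, a, M.one_mem, ha, M.smul_one _⟩

def smulUnit {a : F} (ha : a ∈ M.K) (ha₀ : a ≠ 0) (u : Qˣ) : Qˣ where
  val := M.smul a u
  inv := M.smul a⁻¹ ↑u⁻¹
  val_inv := by
    rw [smul_mul_smul ha (M.inv_mem ha ha₀), mul_inv_cancel₀ ha₀, Units.mul_inv, M.smul_one]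
  inv_val := by
    rw [smul_mul_smul (M.inv_mem ha ha₀) ha, inv_mul_cancel₀ ha₀, Units.inv_mul, M.smul_one]

@[simp]
theorem coe_smulUnit {a : F} (ha : a ∈ M.K) (ha₀ : a ≠ 0) (u : Qˣ) :
    (smulUnit ha ha₀ u : Q) = M.smul a u :=
  rfl

variable (M) in
def IsCovariantRep {m r : ℕ} (dd : Fin m → Q) (b : Fin r → Qˣ) (Ψ : (Fin m → Q) → (Fin r → Qˣ) → Q)
    (ψ : (Fin m → F) → (Fin r → F) → F) : Prop :=
  ∀ {nB : ℕ} {bB : Fin nB → Qˣ} (hB : M.IsBasis bB) (p : Fin m → Q) (q : Fin r → Qˣ),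
    (∀ i, M.Equidim (p i) (dd i)) → (∀ j, M.Equidim ↑(q j) ↑(b j)) →
    ψ (fun i => M.measure hB (p i)) (fun j => M.measure hB ↑(q j)) = M.measure hB (Ψ p q)

variable (M) in
def IsIndependent {r : ℕ} (v : Fin r → Qˣ) : Prop :=
  ∀ lam : F, lam ∈ M.K → ∀ kv : Fin r → ℤ, M.smul lam (↑(∏ j, v j ^ kv j) : Q) = 1 → kv = 0

variable (M) in
def scalarUnits : Subgroup Fˣ where
  carrier := {u | (u : F) ∈ M.K}
  mul_mem' hu hv := M.mul_mem hu hv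
  one_mem' := M.one_mem
  inv_mem' {u} hu := by simpa using M.inv_mem hu u.ne_zero

theorem prod_zpow_mem {ι : Type*} [Fintype ι] {a : ι → F} (ha : ∀ l, a l ∈ M.K)
    (ha₀ : ∀ l, a l ≠ 0) (k : ι → ℤ) : ∏ l, a l ^ k l ∈ M.K := by
  have := M.scalarUnits.prod_mem (t := .univ) fun l _ =>
    M.scalarUnits.zpow_mem (x := Units.mk0 (a l) (ha₀ l)) (ha l) (k l)
  simpa [scalarUnits] using this

theorem prod_zpow_ne_zero {ι : Type*} [Fintype ι] {a : ι → F} (ha₀ : ∀ l, a l ≠ 0) (k : ι → ℤ) :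
    ∏ l, a l ^ k l ≠ 0 :=
  Finset.prod_ne_zero_iff.2 fun l _ => zpow_ne_zero _ (ha₀ l)

section Basis

variable (M) in
noncomputable def exponents {n : ℕ} {b : Fin n → Qˣ} (hB : M.IsBasis b) (q : Q) : Fin n → ℤ :=
  (hB q).choose.2

variable {n : ℕ} {b : Fin n → Qˣ} (hB : M.IsBasis b)

theorem smul_measure_exponents (q : Q) :
    M.smul (M.measure hB q) ↑(∏ i, b i ^ M.exponents hB q i) = q :=
  (hB q).choose_spec.1.symm

theorem measure_mem (q : Q) : M.measure hB q ∈ M.K :=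
  (hB q).choose.1.2

theorem measure_eq_and_exponents_eq {q : Q} {a : F} (ha : a ∈ M.K) {k : Fin n → ℤ}
    (h : M.smul a ↑(∏ i, b i ^ k i) = q) : M.measure hB q = a ∧ M.exponents hB q = k := by
  have := (hB q).choose_spec.2 (⟨a, ha⟩, k) h.symm
  exact ⟨congrArg (fun p => (p.1 : F)) this.symm, congrArg Prod.snd this.symm⟩

theorem eq_of_measure_eq_of_exponents_eq {q q' : Q} (hμ : M.measure hB q = M.measure hB q')
    (he : M.exponents hB q = M.exponents hB q') : q = q' := by
  rw [← smul_measure_exponents hB q, ← smul_measure_exponents hB q', hμ, he]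

theorem measure_and_exponents_smul {a : F} (ha : a ∈ M.K) (q : Q) :
    M.measure hB (M.smul a q) = a * M.measure hB q ∧
      M.exponents hB (M.smul a q) = M.exponents hB q := by
  refine measure_eq_and_exponents_eq hB (M.mul_mem ha (measure_mem hB q)) ?_
  rw [← M.smul_smul ha (measure_mem hB q), smul_measure_exponents]

theorem measure_smul {a : F} (ha : a ∈ M.K) (q : Q) :
    M.measure hB (M.smul a q) = a * M.measure hB q :=
  (measure_and_exponents_smul hB ha q).1

theorem exponents_smul {a : F} (ha : a ∈ M.K) (q : Q) :
    M.exponents hB (M.smul a q) = M.exponents hB q :=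
  (measure_and_exponents_smul hB ha q).2

theorem measure_and_exponents_one :
    M.measure hB 1 = 1 ∧ M.exponents hB 1 = 0 :=
  measure_eq_and_exponents_eq hB M.one_mem (by simp [M.smul_one])

theorem measure_and_exponents_mul (q q' : Q) :
    M.measure hB (q * q') = M.measure hB q * M.measure hB q' ∧
      M.exponents hB (q * q') = M.exponents hB q + M.exponents hB q' := by
  refine measure_eq_and_exponents_eq hB (M.mul_mem (measure_mem hB q) (measure_mem hB q')) ?_
  simp only [Pi.add_apply, zpow_add, Finset.prod_mul_distrib, Units.val_mul]
  rw [← smul_mul_smul (measure_mem hB q) (measure_mem hB q'), smul_measure_exponents,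
    smul_measure_exponents]

variable (M) in
noncomputable def measureHom : Q →* F where
  toFun := M.measure hB
  map_one' := (measure_and_exponents_one hB).1
  map_mul' q q' := (measure_and_exponents_mul hB q q').1

variable (M) in
noncomputable def exponentsHom : Q →* Multiplicative (Fin n → ℤ) where
  toFun q := .ofAdd (M.exponents hB q)
  map_one' := congrArg _ (measure_and_exponents_one hB).2
  map_mul' q q' := congrArg _ (measure_and_exponents_mul hB q q').2

theorem measure_pow (q : Q) (k : ℕ) : M.measure hB (q ^ k) = M.measure hB q ^ k :=
  map_pow (M.measureHom hB) q k

theorem exponents_pow (q : Q) (k : ℕ) : M.exponents hB (q ^ k) = k • M.exponents hB q :=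
  congrArg Multiplicative.toAdd (map_pow (M.exponentsHom hB) q k)

theorem measure_prod_zpow {ι : Type*} [Fintype ι] (u : ι → Qˣ) (z : ι → ℤ) :
    M.measure hB ↑(∏ j, u j ^ z j) = ∏ j, M.measure hB ↑(u j) ^ z j := by
  change ((Units.map (M.measureHom hB) (∏ j, u j ^ z j) : Fˣ) : F) = _
  simp only [map_prod, map_zpow, Units.coe_prod, Units.val_zpow_eq_zpow_val]
  rfl

theorem exponents_prod_zpow {ι : Type*} [Fintype ι] (u : ι → Qˣ) (z : ι → ℤ) :
    M.exponents hB ↑(∏ j, u j ^ z j) = ∑ j, z j • M.exponents hB ↑(u j) := by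
  change Multiplicative.toAdd ((M.exponentsHom hB).comp (Units.coeHom Q) (∏ j, u j ^ z j)) = _
  simp only [map_prod, map_zpow, toAdd_prod, toAdd_zpow]
  rfl

theorem measure_units_inv (u : Qˣ) : M.measure hB ↑u⁻¹ = (M.measure hB u)⁻¹ := by
  change ((Units.map (M.measureHom hB) u⁻¹ : Fˣ) : F) = _
  rw [map_inv, Units.val_inv_eq_inv_val]
  rfl

theorem exponents_units_inv (u : Qˣ) : M.exponents hB ↑u⁻¹ = -M.exponents hB u := by
  change Multiplicative.toAdd ((M.exponentsHom hB).comp (Units.coeHom Q) u⁻¹) = _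
  rw [map_inv, toAdd_inv]
  rfl

theorem measure_ne_zero (u : Qˣ) : M.measure hB u ≠ 0 :=
  ((u.isUnit.map (M.measureHom hB)).ne_zero)

theorem equidim_iff_exponents_eq {q q' : Q} :
    M.Equidim q q' ↔ M.exponents hB q = M.exponents hB q' := by
  constructor
  · rintro ⟨α, β, hα, hβ, h⟩
    rw [← exponents_smul hB hα, h, exponents_smul hB hβ]
  · intro h
    refine ⟨M.measure hB q', M.measure hB q, measure_mem hB q', measure_mem hB q, ?_⟩
    conv_lhs => rw [← smul_measure_exponents hB q]
    conv_rhs => rw [← smul_measure_exponents hB q']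
    rw [M.smul_smul (measure_mem hB q') (measure_mem hB q),
      M.smul_smul (measure_mem hB q) (measure_mem hB q'), mul_comm, h]

theorem eq_of_equidim_of_measure_eq {q q' : Q} (h : M.Equidim q q')
    (hμ : M.measure hB q = M.measure hB q') : q = q' :=
  eq_of_measure_eq_of_exponents_eq hB hμ ((equidim_iff_exponents_eq hB).1 h)

theorem smul_measure_one_of_exponents_eq_zero {q : Q} (hq : M.exponents hB q = 0) :
    M.smul (M.measure hB q) 1 = q := by
  simpa [hq] using smul_measure_exponents hB q

theorem measure_eq_of_exponents_eq_zero {n' : ℕ} {b' : Fin n' → Qˣ} (hB' : M.IsBasis b') {q : Q}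
    (hq : M.exponents hB q = 0) : M.measure hB' q = M.measure hB q := by
  rw [← smul_measure_one_of_exponents_eq_zero hB hq, measure_smul hB' (measure_mem hB q),
    (measure_and_exponents_one hB').1, mul_one, smul_measure_one_of_exponents_eq_zero hB hq]

theorem exponents_pow_mul_inv_prod_zpow_eq_zero {x x₀ : Q} {k r : ℕ} {u v : Fin r → Qˣ}
    {z : Fin r → ℤ} (hx : M.Equidim x x₀)
    (hx₀ : M.Equidim (x₀ ^ k) ↑(∏ j, v j ^ z j)) (huv : ∀ j, M.Equidim ↑(u j) ↑(v j)) :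
    M.exponents hB (x ^ k * ↑(∏ j, u j ^ z j)⁻¹) = 0 := by
  rw [(measure_and_exponents_mul hB _ _).2, exponents_pow, (equidim_iff_exponents_eq hB).1 hx,
    ← exponents_pow, (equidim_iff_exponents_eq hB).1 hx₀, exponents_units_inv, exponents_prod_zpow,
    exponents_prod_zpow]
  simp [(equidim_iff_exponents_eq hB).1 (huv _)]

theorem IsIndependent.linearIndependent_exponents {r : ℕ} {v : Fin r → Qˣ}
    (hv : M.IsIndependent v) : LinearIndependent ℤ fun j => M.exponents hB (v j) := by
  refine Fintype.linearIndependent_iff.2 fun g hg => congrFun (hv _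
    (M.inv_mem (measure_mem hB _) (measure_ne_zero hB (∏ j, v j ^ g j))) g ?_)
  have he : M.exponents hB ↑(∏ j, v j ^ g j) = 0 := by rw [exponents_prod_zpow, hg]
  nth_rw 2 [← smul_measure_one_of_exponents_eq_zero hB he]
  rw [M.smul_smul (M.inv_mem (measure_mem hB _) (measure_ne_zero hB _)) (measure_mem hB _),
    inv_mul_cancel₀ (measure_ne_zero hB _), M.smul_one]

theorem measure_and_exponents_basis (l : Fin n) :
    M.measure hB (b l) = 1 ∧ M.exponents hB (b l) = Pi.single l 1 :=
  measure_eq_and_exponents_eq hB M.one_mem (by simp [M.smul_one, Pi.single_apply])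

section Rescale

variable {a : Fin n → F} (ha : ∀ l, a l ∈ M.K) (ha₀ : ∀ l, a l ≠ 0)
include hB

theorem measure_and_exponents_prod_smulUnit_zpow (k : Fin n → ℤ) :
    M.measure hB ↑(∏ l, smulUnit (ha l) (ha₀ l) (b l) ^ k l) = ∏ l, a l ^ k l ∧
      M.exponents hB ↑(∏ l, smulUnit (ha l) (ha₀ l) (b l) ^ k l) = k := by
  rw [measure_prod_zpow, exponents_prod_zpow]
  simp only [coe_smulUnit, measure_smul hB (ha _), exponents_smul hB (ha _),
    (measure_and_exponents_basis hB _).1, (measure_and_exponents_basis hB _).2, mul_one, true_and]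
  exact (pi_eq_sum_univ' k).symm

theorem coe_prod_smulUnit_zpow (k : Fin n → ℤ) :
    (↑(∏ l, smulUnit (ha l) (ha₀ l) (b l) ^ k l) : Q) =
      M.smul (∏ l, a l ^ k l) ↑(∏ l, b l ^ k l) := by
  obtain ⟨hμ, he⟩ := measure_and_exponents_prod_smulUnit_zpow hB ha ha₀ k
  conv_lhs => rw [← smul_measure_exponents hB ↑(∏ l, smulUnit (ha l) (ha₀ l) (b l) ^ k l)]
  rw [hμ, he]

theorem smul_prod_smulUnit_zpow_exponents (q : Q) :
    M.smul (M.measure hB q * (∏ l, a l ^ M.exponents hB q l)⁻¹)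
      ↑(∏ l, smulUnit (ha l) (ha₀ l) (b l) ^ M.exponents hB q l) = q := by
  rw [coe_prod_smulUnit_zpow hB, M.smul_smul (M.mul_mem (measure_mem hB q)
      (M.inv_mem (prod_zpow_mem ha ha₀ _) (prod_zpow_ne_zero ha₀ _)))
      (prod_zpow_mem ha ha₀ _),
    inv_mul_cancel_right₀ (prod_zpow_ne_zero ha₀ _), smul_measure_exponents]

theorem isBasis_smulUnit : M.IsBasis fun l => smulUnit (ha l) (ha₀ l) (b l) := by
  intro q
  refine ⟨(⟨_, M.mul_mem (measure_mem hB q) (M.inv_mem (prod_zpow_mem ha ha₀ _)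
    (prod_zpow_ne_zero ha₀ _))⟩, M.exponents hB q),
    (smul_prod_smulUnit_zpow_exponents hB ha ha₀ q).symm, ?_⟩
  rintro ⟨⟨β, hβ⟩, k⟩ h
  rw [coe_prod_smulUnit_zpow hB, M.smul_smul hβ (prod_zpow_mem ha ha₀ k)] at h
  obtain ⟨hμ, rfl⟩ :=
    measure_eq_and_exponents_eq hB (M.mul_mem hβ (prod_zpow_mem ha ha₀ k)) h.symm
  refine Prod.ext (Subtype.ext ?_) rfl
  show β = M.measure hB q * (∏ l, a l ^ M.exponents hB q l)⁻¹
  rw [hμ, mul_inv_cancel_right₀ (prod_zpow_ne_zero ha₀ _)]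

theorem measure_isBasis_smulUnit (hB' : M.IsBasis fun l => smulUnit (ha l) (ha₀ l) (b l))
    (q : Q) : M.measure hB' q = M.measure hB q * (∏ l, a l ^ M.exponents hB q l)⁻¹ :=
  (measure_eq_and_exponents_eq hB' (M.mul_mem (measure_mem hB q) (M.inv_mem
    (prod_zpow_mem ha ha₀ _) (prod_zpow_ne_zero ha₀ _)))
    (smul_prod_smulUnit_zpow_exponents hB ha ha₀ q)).1

end Rescale

end Basis

end

section PositiveReals

variable {Q : Type*} [CommMonoid Q] {M : ScalableMonoid ℝ Q} (hK : M.K = {x : ℝ | 0 < x})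
  {n : ℕ} {bB : Fin n → Qˣ} (hB : M.IsBasis bB)
include hK

theorem mem_K_of_pos {a : ℝ} (ha : 0 < a) : a ∈ M.K :=
  hK ▸ ha

theorem measure_pos (q : Q) : 0 < M.measure hB q := by
  simpa [hK] using measure_mem hB q

theorem exists_isBasis_measure_eq_div_exp (χ : (Fin n → ℤ) →+ ℝ) :
    ∃ (b' : Fin n → Qˣ) (hB' : M.IsBasis b'), ∀ q,
      M.measure hB' q = M.measure hB q / Real.exp (χ (M.exponents hB q)) := by
  have ha (l : Fin n) : Real.exp (χ (Pi.single l 1)) ∈ M.K := mem_K_of_pos hK (Real.exp_pos _)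
  have ha₀ (l : Fin n) : Real.exp (χ (Pi.single l 1)) ≠ 0 := (Real.exp_pos _).ne'
  refine ⟨_, isBasis_smulUnit hB ha ha₀, fun q => ?_⟩
  rw [measure_isBasis_smulUnit hB ha ha₀, prod_exp_map_single_zpow, div_eq_mul_inv]

include hB in
theorem exists_isBasis_measure_eq_one {r : ℕ} {b : Fin r → Qˣ} (hb : M.IsIndependent b)
    {q : Fin r → Qˣ} (hq : ∀ j, M.Equidim ↑(q j) ↑(b j)) :
    ∃ (b' : Fin n → Qˣ) (hB' : M.IsBasis b'), ∀ j, M.measure hB' (q j) = 1 := by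
  obtain ⟨χ, hχ⟩ := exists_addMonoidHom_apply_eq (hb.linearIndependent_exponents hB)
    fun j => Real.log (M.measure hB (q j))
  obtain ⟨b', hB', hμ⟩ := exists_isBasis_measure_eq_div_exp hK hB χ
  refine ⟨b', hB', fun j => ?_⟩
  rw [hμ, (equidim_iff_exponents_eq hB).1 (hq j), hχ, Real.exp_log (measure_pos hK hB _),
    div_self (measure_pos hK hB _).ne']

variable {m r : ℕ} {d : Q} {dd : Fin m → Q} {b : Fin r → Qˣ}
  {Ψ : (Fin m → Q) → (Fin r → Qˣ) → Q} {ψ : (Fin m → ℝ) → (Fin r → ℝ) → ℝ}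
  {c : Fin m → ℕ} {cc : Fin m → Fin r → ℤ}

theorem map_exponents_eq_zero_of_isCovariantRep (hψ : M.IsCovariantRep dd b Ψ ψ)
    (hd : M.Equidim (Ψ dd b) d) (hc : ∀ i, c i ≠ 0)
    (hrel : ∀ i, M.Equidim (dd i ^ c i) ↑(∏ j, b j ^ cc i j)) {χ : (Fin n → ℤ) →+ ℝ}
    (hχ : ∀ j, χ (M.exponents hB (b j)) = 0) : χ (M.exponents hB d) = 0 := by
  obtain ⟨b', hB', hμ⟩ := exists_isBasis_measure_eq_div_exp hK hB χ
  have hdd (i : Fin m) : χ (M.exponents hB (dd i)) = 0 := by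
    have h := congrArg χ ((equidim_iff_exponents_eq hB).1 (hrel i))
    simp only [exponents_pow, exponents_prod_zpow, map_nsmul, map_sum, map_zsmul, hχ, smul_zero,
      Finset.sum_const_zero] at h
    exact (smul_eq_zero.1 h).resolve_left (hc i)
  -- The rescaled basis leaves the measures of `dd` and `b` unchanged, hence also that of `Ψ dd b`.
  have key := hψ hB' dd b (fun _ => equidim_refl _) (fun _ => equidim_refl _)
  simp only [hμ, hdd, hχ, Real.exp_zero, div_one, (equidim_iff_exponents_eq hB).1 hd] at key
  rw [hψ hB dd b (fun _ => equidim_refl _) (fun _ => equidim_refl _), eq_div_iff (by positivity),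
    mul_eq_left₀ (measure_pos hK hB _).ne'] at key
  exact Real.exp_eq_one_iff _ |>.1 key

include hB in
theorem IsCovariantRep.pos (hψ : M.IsCovariantRep dd b Ψ ψ) {x : Fin m → ℝ} {y : Fin r → ℝ}
    (hx : ∀ i, 0 < x i) (hy : ∀ j, 0 < y j) : 0 < ψ x y := by
  have hμ (q : Q) : M.measure hB q ≠ 0 := (measure_pos hK hB q).ne'
  have ha (i : Fin m) : x i / M.measure hB (dd i) ∈ M.K :=
    mem_K_of_pos hK (div_pos (hx i) (measure_pos hK hB _))
  have ha' (j : Fin r) : y j / M.measure hB (b j) ∈ M.K :=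
    mem_K_of_pos hK (div_pos (hy j) (measure_pos hK hB _))
  have h := hψ hB (fun i => M.smul (x i / M.measure hB (dd i)) (dd i))
    (fun j => smulUnit (ha' j) (div_ne_zero (hy j).ne' (hμ _)) (b j))
    (fun i => smul_equidim (ha i) _) (fun j => smul_equidim (ha' j) _)
  simp only [coe_smulUnit, measure_smul hB (ha _), measure_smul hB (ha' _),
    div_mul_cancel₀ _ (hμ _)] at h
  exact h ▸ measure_pos hK hB _

theorem pow_eq_smul_prod_zpow (hb : M.IsIndependent b) (hψ : M.IsCovariantRep dd b Ψ ψ)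
    (hc : ∀ i, c i ≠ 0) (hrel : ∀ i, M.Equidim (dd i ^ c i) ↑(∏ j, b j ^ cc i j)) {k : ℕ}
    {kv : Fin r → ℤ} (hd : M.Equidim (d ^ k) ↑(∏ j, b j ^ kv j)) {p : Fin m → Q}
    {q : Fin r → Qˣ} (hp : ∀ i, M.Equidim (p i) (dd i)) (hq : ∀ j, M.Equidim ↑(q j) ↑(b j))
    (hΨ : M.Equidim (Ψ p q) d) :
    Ψ p q ^ k = M.smul
      (ψ (fun i => M.measure hB (p i ^ c i * ↑(∏ j, q j ^ cc i j)⁻¹) ^ (c i : ℝ)⁻¹) 1 ^ k)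
      ↑(∏ j, q j ^ kv j) := by
  obtain ⟨b', hB', hq₁⟩ := exists_isBasis_measure_eq_one hK hB hb hq
  have hp₁ (i : Fin m) : M.measure hB' (p i) =
      M.measure hB (p i ^ c i * ↑(∏ j, q j ^ cc i j)⁻¹) ^ (c i : ℝ)⁻¹ := by
    rw [← measure_eq_of_exponents_eq_zero hB hB'
        (exponents_pow_mul_inv_prod_zpow_eq_zero hB (hp i) (hrel i) hq),
      (measure_and_exponents_mul hB' _ _).1, measure_pow, measure_units_inv, measure_prod_zpow]
    simp [hq₁, Real.pow_rpow_inv_natCast (measure_pos hK hB' _).le (hc i)]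
  have hΨ' : M.measure hB' (Ψ p q) =
      ψ (fun i => M.measure hB (p i ^ c i * ↑(∏ j, q j ^ cc i j)⁻¹) ^ (c i : ℝ)⁻¹) 1 := by
    rw [← hψ hB' p q hp hq]
    simp only [hp₁, hq₁]
    rfl
  have hs := mem_K_of_pos hK (pow_pos (hΨ' ▸ measure_pos hK hB' (Ψ p q)) k)
  refine eq_of_equidim_of_measure_eq hB' ?_ ?_
  · rw [equidim_iff_exponents_eq hB, exponents_smul hB hs, exponents_pow,
      (equidim_iff_exponents_eq hB).1 hΨ, ← exponents_pow, (equidim_iff_exponents_eq hB).1 hd,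
      exponents_prod_zpow, exponents_prod_zpow]
    simp [(equidim_iff_exponents_eq hB).1 (hq _)]
  · rw [measure_pow, hΨ', measure_smul hB' hs, measure_prod_zpow]
    simp [hq₁]

end PositiveReals

end ScalableMonoid

open ScalableMonoid in
/-- Reformulated Π theorem: in a quantity space over the
positive reals, let `b₁, …, b_r` be independent and each `dᵢ` satisfy
`dᵢ^{cᵢ} ~ ∏ⱼ bⱼ^{c_ij}` with `cᵢ > 0`. If a quantity function `Ψ` taking
admissible tuples (`pᵢ ~ dᵢ`, invertible `qⱼ ~ bⱼ`) to quantities `~ d` has a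
covariant scalar representation, then there are integers `k > 0`, `kⱼ` with
`d^k ~ ∏ bⱼ^{kⱼ}`, integers `cᵢ > 0`, `c_ij` with `dᵢ^{cᵢ} ~ ∏ bⱼ^{c_ij}`,
and a quasiscalar-valued `Φ` such that on admissible inputs
`Ψ(p,q)^k = (∏ⱼ qⱼ^{kⱼ}) · Φ(Π₁, …, Π_m)` where
`Πᵢ = pᵢ^{cᵢ} · (∏ⱼ qⱼ^{c_ij})⁻¹`. -/
theorem pi_theorem {Q : Type*} [CommMonoid Q]
    (M : ScalableMonoid ℝ Q) (hK : M.K = {x : ℝ | 0 < x})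
    (hQS : M.IsQuantitySpace)
    {m r : ℕ} (d : Q) (dd : Fin m → Q) (b : Fin r → Qˣ)
    (hb : ∀ lam : ℝ, lam ∈ M.K → ∀ kv : Fin r → ℤ,
      M.smul lam (↑(∏ j, b j ^ kv j) : Q) = 1 → kv = 0)
    (hdd : ∀ i, ∃ (ci : ℕ) (cij : Fin r → ℤ), 0 < ci ∧
      M.Equidim (dd i ^ ci) (↑(∏ j, b j ^ cij j) : Q))
    (Ψ : (Fin m → Q) → (Fin r → Qˣ) → Q)
    (hΨ : ∀ (p : Fin m → Q) (q : Fin r → Qˣ),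
      (∀ i, M.Equidim (p i) (dd i)) → (∀ j, M.Equidim ↑(q j) ↑(b j)) →
      M.Equidim (Ψ p q) d)
    (hcov : ∃ ψ : (Fin m → ℝ) → (Fin r → ℝ) → ℝ,
      ∀ {nB : ℕ} {bB : Fin nB → Qˣ} (hB : M.IsBasis bB)
        (p : Fin m → Q) (q : Fin r → Qˣ),
        (∀ i, M.Equidim (p i) (dd i)) → (∀ j, M.Equidim ↑(q j) ↑(b j)) →
        ψ (fun i => M.measure hB (p i)) (fun j => M.measure hB ↑(q j)) =
          M.measure hB (Ψ p q)) :
    ∃ (k : ℕ) (kv : Fin r → ℤ) (c : Fin m → ℕ) (cc : Fin m → Fin r → ℤ),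
      0 < k ∧
      M.Equidim (d ^ k) (↑(∏ j, b j ^ kv j) : Q) ∧
      (∀ i, 0 < c i) ∧
      (∀ i, M.Equidim (dd i ^ c i) (↑(∏ j, b j ^ cc i j) : Q)) ∧
      ∃ Φ : (Fin m → Q) → Q,
        (∀ Pi : Fin m → Q, (∀ i, M.Equidim (Pi i) 1) → M.Equidim (Φ Pi) 1) ∧
        ∀ (p : Fin m → Q) (q : Fin r → Qˣ),
          (∀ i, M.Equidim (p i) (dd i)) → (∀ j, M.Equidim ↑(q j) ↑(b j)) →
          (Ψ p q) ^ k =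
            (↑(∏ j, q j ^ kv j) : Q) *
              Φ (fun i => p i ^ c i * (↑((∏ j, q j ^ cc i j)⁻¹) : Q)) := by
  obtain ⟨n, bB, hB⟩ := hQS
  obtain ⟨ψ, hψ⟩ := hcov
  choose c cc hc hrel using hdd
  have hc₀ (i : Fin m) : c i ≠ 0 := (hc i).ne'
  obtain ⟨k, hk, kv, hkv⟩ :=
    exists_pos_nsmul_eq_sum_zsmul (IsIndependent.linearIndependent_exponents hB hb)
    fun χ hχ => map_exponents_eq_zero_of_isCovariantRep hK hB hψ
      (hΨ dd b (fun _ => equidim_refl _) (fun _ => equidim_refl _)) hc₀ hrel hχ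
  have hd : M.Equidim (d ^ k) ↑(∏ j, b j ^ kv j) := by
    rw [equidim_iff_exponents_eq hB, exponents_pow, exponents_prod_zpow, hkv]
  have hφ (Pi : Fin m → Q) : ψ (fun i => M.measure hB (Pi i) ^ (c i : ℝ)⁻¹) 1 ^ k ∈ M.K :=
    mem_K_of_pos hK (pow_pos (IsCovariantRep.pos hK hB hψ
      (fun i => Real.rpow_pos_of_pos (measure_pos hK hB _) _) fun _ => one_pos) k)
  refine ⟨k, kv, c, cc, hk, hd, hc, hrel,
    fun Pi => M.smul (ψ (fun i => M.measure hB (Pi i) ^ (c i : ℝ)⁻¹) 1 ^ k) 1,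
    fun Pi _ => smul_equidim (hφ Pi) 1, fun p q hp hq => ?_⟩
  rw [pow_eq_smul_prod_zpow hK hB hb hψ hc₀ hrel hd hp hq (hΨ p q hp hq),
    smul_eq_mul_smul_one (hφ _)]
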